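/- Let r, α, β, γ, ν, μ, τ, ω, θ, σ > 0 with ω > τ and γ(μα − β) > 0, let p, q ≥ 0, and let z be real with |z| ≤ 1. Then the (p,q)-Mathieu-type series with the sequence a_k = [Γ(θk+σ)]^γ is the beta-type integral transform of the classical generalized Mathieu-type power series: S_{μ,ν,τ,ω}^{(α,β)}(r; {[Γ(θk+σ)]^γ}; p,q; z) = (1/B(τ, ω−τ)) ∫₀¹ t^{τ−1} (1−t)^{ω−τ−1} exp(−p/t − q/(1−t)) · S_{μ,ν}^{(α,β)}(r; {[Γ(θk+σ)]^γ}; zt) dt. -/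

import Mathlib

open Real MeasureTheory Set Filter

/-- Pochhammer symbol `(a)_n = Γ(a+n)/Γ(a)`. -/
noncomputable def poch (a : ℝ) (n : ℕ) : ℝ := Real.Gamma (a + n) / Real.Gamma a

/-- Euler beta function. -/
noncomputable def betaE (x y : ℝ) : ℝ := Real.Gamma x * Real.Gamma y / Real.Gamma (x + y)

/-- Extended beta function `B_{p,q}(x,y)`. -/
noncomputable def betaPQ (p q x y : ℝ) : ℝ :=
  ∫ t in Ioo (0:ℝ) 1, t ^ (x - 1) * (1 - t) ^ (y - 1) * Real.exp (-p / t - q / (1 - t))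

/-- The `(p,q)`-Mittag-Leffler function `E_{δ,θ,σ;p,q}^{(lam,τ,ω)}(z)`. -/
noncomputable def mlPQ (δ θ σ lam τ ω p q z : ℝ) : ℝ :=
  ∑' k : ℕ, poch lam k * betaPQ p q (τ + (k : ℝ)) (ω - τ) * z ^ k /
    (Real.Gamma (θ * (k : ℝ) + σ) ^ δ * betaE τ (ω - τ) * (Nat.factorial k : ℝ))

/-- The `(p,q)`-Mathieu-type power series attached to the sequence `a`. -/
noncomputable def mathieuPQ (μ ν τ ω α β r p q z : ℝ) (a : ℕ → ℝ) : ℝ :=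
  ∑' n : ℕ, 2 * a (n + 1) ^ β * poch ν (n + 1) *
      betaPQ p q (τ + ((n : ℝ) + 1)) (ω - τ) * z ^ (n + 1) /
    ((Nat.factorial (n + 1) : ℝ) * betaE τ (ω - τ) * (a (n + 1) ^ α + r ^ 2) ^ μ)

/-- Generalized Mathieu-type power series `S_{μ,ν}^{(α,β)}(r; a; w)`. -/
noncomputable def mathieuC (μ ν α β r w : ℝ) (a : ℕ → ℝ) : ℝ :=
  ∑' n : ℕ, 2 * a (n + 1) ^ β * poch ν (n + 1) * w ^ (n + 1) /
    ((Nat.factorial (n + 1) : ℝ) * (a (n + 1) ^ α + r ^ 2) ^ μ)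

/-! Since `B_{p,q}(τ + n, ω - τ)` is the integral of `tⁿ` against the weight
`t^(τ-1) (1-t)^(ω-τ-1) exp(-p/t - q/(1-t))`, the identity is term-by-term integration of the
Mathieu series in `zt`. The interchange is legitimate because `|zt| ≤ 1` on `(0, 1)` and the
coefficients are absolutely summable: for `a_k = Γ(θk + σ)^γ` they are at most
`2 (ν)ₖ/k! · Γ(θk + σ)^(-γ(μα - β))`, and log-convexity of `Γ` gives
`Γ(x + θ) ≥ (x - 1)^θ Γ(x)`, so the ratio test applies. -/

open scoped Nat

lemma poch_pos {a : ℝ} (ha : 0 < a) (n : ℕ) : 0 < poch a n :=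
  div_pos (Gamma_pos_of_pos (by positivity : 0 < a + n)) (Gamma_pos_of_pos ha)

lemma poch_succ {a : ℝ} (ha : 0 < a) (n : ℕ) : poch a (n + 1) = poch a n * (a + n) := by
  rw [poch, poch, Nat.cast_succ, ← add_assoc, Gamma_add_one (by positivity : 0 < a + n).ne']
  ring

/-- Log-convexity of `Γ`: the slope of `log Γ` on `[x, x + θ]` is at least its slope `log (x - 1)`
on `[x - 1, x]`. -/
lemma Gamma_mul_rpow_le_Gamma_add {x θ : ℝ} (hx : 1 < x) (hθ : 0 < θ) :
    Gamma x * (x - 1) ^ θ ≤ Gamma (x + θ) := by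
  have hx1 : 0 < x - 1 := by linarith
  have hslope := convexOn_log_Gamma.slope_mono_adjacent (mem_Ioi.mpr hx1)
    (mem_Ioi.mpr (by linarith : 0 < x + θ)) (by linarith : x - 1 < x) (by linarith : x < x + θ)
  have hlog : log (Gamma x) - log (Gamma (x - 1)) = log (x - 1) := by
    have hΓ : Gamma x = (x - 1) * Gamma (x - 1) := by simpa using Gamma_add_one hx1.ne'
    rw [hΓ, log_mul hx1.ne' (Gamma_pos_of_pos hx1).ne', add_sub_cancel_right]
  simp only [Function.comp_apply, sub_sub_cancel, add_sub_cancel_left, div_one, hlog] at hslope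
  rw [← log_le_log_iff (by have := Gamma_pos_of_pos (by linarith : 0 < x); positivity)
    (Gamma_pos_of_pos (by linarith)), log_mul (Gamma_pos_of_pos (by linarith)).ne'
    (rpow_pos_of_pos hx1 θ).ne', log_rpow hx1]
  linarith [(le_div_iff₀ hθ).mp hslope]

lemma Gamma_add_rpow_neg_le {x θ ε : ℝ} (hx : 1 < x) (hθ : 0 < θ) (hε : 0 ≤ ε) :
    Gamma (x + θ) ^ (-ε) ≤ (x - 1) ^ (-(θ * ε)) * Gamma x ^ (-ε) := by
  have hx1 : 0 < x - 1 := by linarith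
  have hΓ : 0 < Gamma x := Gamma_pos_of_pos (by linarith)
  calc Gamma (x + θ) ^ (-ε) ≤ (Gamma x * (x - 1) ^ θ) ^ (-ε) :=
        rpow_le_rpow_of_nonpos (by positivity) (Gamma_mul_rpow_le_Gamma_add hx hθ)
          (by linarith)
    _ = (x - 1) ^ (-(θ * ε)) * Gamma x ^ (-ε) := by
        rw [mul_rpow hΓ.le (by positivity), ← rpow_mul hx1.le, mul_neg, mul_comm]

lemma summable_poch_div_factorial_mul_Gamma_rpow_neg {ν θ ε : ℝ} (σ : ℝ) (hν : 0 < ν)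
    (hθ : 0 < θ) (hε : 0 < ε) :
    Summable fun n : ℕ => poch ν n / n ! * Gamma (θ * n + σ) ^ (-ε) := by
  have hx : Tendsto (fun n : ℕ => θ * n + σ - 1) atTop atTop :=
    tendsto_atTop_add_const_right _ _ <| tendsto_atTop_add_const_right _ _ <|
      tendsto_natCast_atTop_atTop.const_mul_atTop hθ
  have hsmall : ∀ᶠ n : ℕ in atTop, (θ * n + σ - 1) ^ (-(θ * ε)) < (2 * (ν + 1))⁻¹ :=
    (tendsto_order.1 ((tendsto_rpow_neg_atTop (mul_pos hθ hε)).comp hx)).2 _ (by positivity)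
  refine summable_of_ratio_norm_eventually_le (r := 1 / 2) (by norm_num) ?_
  filter_upwards [hx.eventually_gt_atTop 0, hsmall] with n hx1 hsmall
  set x := θ * n + σ
  have hΓ : 0 < Gamma x := Gamma_pos_of_pos (by linarith)
  have hΓθ : 0 < Gamma (x + θ) := Gamma_pos_of_pos (by linarith)
  have hpoch := poch_pos hν n
  have hpoch' := poch_pos hν (n + 1)
  have hratio : (ν + n) / (n + 1) ≤ ν + 1 := by
    rw [div_le_iff₀ (by positivity)]
    nlinarith [n.cast_nonneg (α := ℝ)]
  have hshift : θ * ((n + 1 : ℕ) : ℝ) + σ = x + θ := by push_cast; ring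
  rw [hshift, norm_of_nonneg (by positivity), norm_of_nonneg (by positivity), poch_succ hν,
    Nat.factorial_succ, Nat.cast_mul, Nat.cast_succ]
  calc poch ν n * (ν + n) / ((n + 1) * n !) * Gamma (x + θ) ^ (-ε)
      = (ν + n) / (n + 1) * (poch ν n / n !) * Gamma (x + θ) ^ (-ε) := by
        rw [mul_comm (poch ν n), mul_div_mul_comm]
    _ ≤ (ν + 1) * (poch ν n / n !) * ((x - 1) ^ (-(θ * ε)) * Gamma x ^ (-ε)) := by
        gcongr
        exact Gamma_add_rpow_neg_le (by linarith) hθ hε.le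
    _ ≤ (ν + 1) * (poch ν n / n !) * ((2 * (ν + 1))⁻¹ * Gamma x ^ (-ε)) := by
        gcongr
    _ = 1 / 2 * (poch ν n / n ! * Gamma x ^ (-ε)) := by
        field_simp

lemma rpow_div_rpow_add_sq_le {G : ℝ} (hG : 0 < G) (γ α β μ r : ℝ) (hμ : 0 ≤ μ) :
    (G ^ γ) ^ β / ((G ^ γ) ^ α + r ^ 2) ^ μ ≤ G ^ (-(γ * (μ * α - β))) := by
  calc (G ^ γ) ^ β / ((G ^ γ) ^ α + r ^ 2) ^ μ ≤ (G ^ γ) ^ β / ((G ^ γ) ^ α) ^ μ := by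
        gcongr
        linarith [sq_nonneg r]
    _ = G ^ (-(γ * (μ * α - β))) := by
        rw [← rpow_mul hG.le, ← rpow_mul hG.le, ← rpow_mul hG.le, ← rpow_sub hG]
        ring_nf

noncomputable def mathieuCoeff (μ ν α β r : ℝ) (a : ℕ → ℝ) (n : ℕ) : ℝ :=
  2 * a (n + 1) ^ β * poch ν (n + 1) / ((n + 1)! * (a (n + 1) ^ α + r ^ 2) ^ μ)

lemma mathieuC_eq_tsum (μ ν α β r w : ℝ) (a : ℕ → ℝ) :
    mathieuC μ ν α β r w a = ∑' n, mathieuCoeff μ ν α β r a n * w ^ (n + 1) := by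
  refine tsum_congr fun n => ?_
  rw [mathieuCoeff]
  ring

lemma mathieuPQ_eq_tsum (μ ν τ ω α β r p q z : ℝ) (a : ℕ → ℝ) :
    mathieuPQ μ ν τ ω α β r p q z a = (1 / betaE τ (ω - τ)) *
      ∑' n : ℕ, mathieuCoeff μ ν α β r a n * z ^ (n + 1) *
        betaPQ p q (τ + (n + 1 : ℕ)) (ω - τ) := by
  rw [← tsum_mul_left]
  refine tsum_congr fun n => ?_
  rw [mathieuCoeff, Nat.cast_succ]
  ring

lemma norm_mathieuCoeff_Gamma_rpow_le {μ ν α β γ θ σ : ℝ} (r : ℝ) (hμ : 0 ≤ μ) (hν : 0 < ν)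
    (hθ : 0 < θ) (hσ : 0 < σ) (n : ℕ) :
    ‖mathieuCoeff μ ν α β r (fun k => Gamma (θ * k + σ) ^ γ) n‖ ≤
      2 * (poch ν (n + 1) / (n + 1)! *
        Gamma (θ * (n + 1 : ℕ) + σ) ^ (-(γ * (μ * α - β)))) := by
  have hG : 0 < Gamma (θ * (n + 1 : ℕ) + σ) := Gamma_pos_of_pos (by positivity)
  have hpoch := poch_pos hν (n + 1)
  rw [mathieuCoeff, norm_of_nonneg (by positivity)]
  calc _ = 2 * (poch ν (n + 1) / (n + 1)!) * ((Gamma (θ * (n + 1 : ℕ) + σ) ^ γ) ^ β /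
        ((Gamma (θ * (n + 1 : ℕ) + σ) ^ γ) ^ α + r ^ 2) ^ μ) := by ring
    _ ≤ _ := by
        rw [← mul_assoc]
        gcongr
        exact rpow_div_rpow_add_sq_le hG γ α β μ r hμ

lemma summable_norm_mathieuCoeff_Gamma_rpow {μ ν α β γ θ σ : ℝ} (r : ℝ) (hμ : 0 ≤ μ)
    (hν : 0 < ν) (hθ : 0 < θ) (hσ : 0 < σ) (hexp : 0 < γ * (μ * α - β)) :
    Summable fun n => ‖mathieuCoeff μ ν α β r (fun k => Gamma (θ * k + σ) ^ γ) n‖ :=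
  .of_nonneg_of_le (fun _ => norm_nonneg _) (norm_mathieuCoeff_Gamma_rpow_le r hμ hν hθ hσ)
    (((summable_nat_add_iff 1).2
      (summable_poch_div_factorial_mul_Gamma_rpow_neg σ hν hθ hexp)).mul_left 2)

lemma integrableOn_beta_integrand {x y : ℝ} (hx : 0 < x) (hy : 0 < y) :
    IntegrableOn (fun t : ℝ => t ^ (x - 1) * (1 - t) ^ (y - 1)) (Ioo 0 1) := by
  have h := (Complex.betaIntegral_convergent (u := x) (v := y) (by simpa using hx)
    (by simpa using hy)).norm
  rw [intervalIntegrable_iff_integrableOn_Ioc_of_le zero_le_one] at h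
  refine (h.mono_set Ioo_subset_Ioc_self).congr_fun (fun t ht => ?_) measurableSet_Ioo
  have ht1 : 0 < 1 - t := by linarith [ht.2]
  dsimp only
  rw [norm_mul, show (1 : ℂ) - t = (1 - t : ℝ) by push_cast; rfl,
    Complex.norm_cpow_eq_rpow_re_of_pos ht.1, Complex.norm_cpow_eq_rpow_re_of_pos ht1]
  simp

lemma integrableOn_betaPQ_integrand {p q x y : ℝ} (hp : 0 ≤ p) (hq : 0 ≤ q) (hx : 0 < x)
    (hy : 0 < y) :
    IntegrableOn (fun t => t ^ (x - 1) * (1 - t) ^ (y - 1) * exp (-p / t - q / (1 - t)))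
      (Ioo 0 1) := by
  refine (integrableOn_beta_integrand hx hy).mul_bdd (c := 1) (by fun_prop) ?_
  filter_upwards [ae_restrict_mem measurableSet_Ioo] with t ht
  have ht1 : 0 < 1 - t := by linarith [ht.2]
  rw [norm_of_nonneg (exp_nonneg _), exp_le_one_iff, neg_div]
  linarith [div_nonneg hp ht.1.le, div_nonneg hq ht1.le]

lemma betaPQ_add_nat (p q x y : ℝ) (n : ℕ) :
    betaPQ p q (x + n) y = ∫ t in Ioo 0 1,
      t ^ n * (t ^ (x - 1) * (1 - t) ^ (y - 1) * exp (-p / t - q / (1 - t))) := by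
  refine setIntegral_congr_fun measurableSet_Ioo fun t ht => ?_
  rw [add_sub_right_comm, rpow_add ht.1, rpow_natCast]
  ring

lemma integral_mul_tsum_eq_tsum_mul_integral {Ω : Type*} [MeasurableSpace Ω] {μ : Measure Ω}
    {w : Ω → ℝ} (hw : Integrable w μ) {c : ℕ → ℝ} (hc : Summable fun n => ‖c n‖)
    {f : ℕ → Ω → ℝ} (hf : ∀ n, AEStronglyMeasurable (f n) μ)
    (hf_le : ∀ n, ∀ᵐ t ∂μ, ‖f n t‖ ≤ 1) :
    ∫ t, w t * ∑' n, c n * f n t ∂μ = ∑' n, c n * ∫ t, f n t * w t ∂μ := by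
  have hint : ∀ n, Integrable (fun t => c n * (f n t * w t)) μ := fun n =>
    (hw.bdd_mul (hf n) (hf_le n)).const_mul _
  have hnorm : ∀ n, ∫ t, ‖c n * (f n t * w t)‖ ∂μ ≤ ‖c n‖ * ∫ t, ‖w t‖ ∂μ := fun n => by
    rw [← integral_const_mul]
    refine integral_mono_ae (hint n).norm (hw.norm.const_mul _) ?_
    filter_upwards [hf_le n] with t ht
    rw [norm_mul, norm_mul]
    gcongr
    exact mul_le_of_le_one_left (norm_nonneg _) ht
  have hsum : Summable fun n => ∫ t, ‖c n * (f n t * w t)‖ ∂μ :=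
    .of_nonneg_of_le (fun _ => integral_nonneg fun _ => norm_nonneg _) hnorm (hc.mul_right _)
  simp_rw [← integral_const_mul, integral_tsum_of_summable_integral_norm hint hsum,
    ← tsum_mul_left]
  congr with t
  congr with n
  ring

theorem mathieuPQ_eq_integral_mathieuC {μ ν τ ω α β r p q z : ℝ} {a : ℕ → ℝ}
    (ha : Summable fun n => ‖mathieuCoeff μ ν α β r a n‖) (hτ : 0 < τ) (hτω : τ < ω)
    (hp : 0 ≤ p) (hq : 0 ≤ q) (hz : |z| ≤ 1) :
    mathieuPQ μ ν τ ω α β r p q z a =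
      (1 / betaE τ (ω - τ)) *
        ∫ t in Ioo (0:ℝ) 1, t ^ (τ - 1) * (1 - t) ^ (ω - τ - 1) *
          exp (-p / t - q / (1 - t)) * mathieuC μ ν α β r (z * t) a := by
  have hpow_le : ∀ n : ℕ, ∀ᵐ t ∂volume.restrict (Ioo (0:ℝ) 1), ‖(z * t) ^ (n + 1)‖ ≤ 1 :=
    fun n => by
      filter_upwards [ae_restrict_mem measurableSet_Ioo] with t ht
      rw [norm_pow, norm_mul, norm_of_nonneg ht.1.le]
      exact pow_le_one₀ (by have := ht.1; positivity) (mul_le_one₀ hz ht.1.le ht.2.le)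
  simp_rw [mathieuPQ_eq_tsum, mathieuC_eq_tsum, integral_mul_tsum_eq_tsum_mul_integral
    (integrableOn_betaPQ_integrand hp hq hτ (sub_pos.2 hτω)) ha (by fun_prop) hpow_le,
    betaPQ_add_nat, mul_pow, mul_assoc, ← integral_const_mul]

theorem statement17_general (r α β γ ν μ τ ω θ σ p q z : ℝ)
    (hν : 0 < ν) (hμ : 0 < μ)
    (hτ : 0 < τ) (hθ : 0 < θ) (hσ : 0 < σ) (hτω : τ < ω)
    (hexp : 0 < γ * (μ * α - β)) (hp : 0 ≤ p) (hq : 0 ≤ q) (hz : |z| ≤ 1) :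
    mathieuPQ μ ν τ ω α β r p q z (fun k => Real.Gamma (θ * (k : ℝ) + σ) ^ γ) =
      (1 / betaE τ (ω - τ)) *
        ∫ t in Ioo (0:ℝ) 1, t ^ (τ - 1) * (1 - t) ^ (ω - τ - 1) *
          Real.exp (-p / t - q / (1 - t)) *
          mathieuC μ ν α β r (z * t) (fun k => Real.Gamma (θ * (k : ℝ) + σ) ^ γ) :=
  mathieuPQ_eq_integral_mathieuC
    (summable_norm_mathieuCoeff_Gamma_rpow r hμ.le hν hθ hσ hexp) hτ hτω hp hq hz

theorem statement17 (r α β γ ν μ τ ω θ σ p q z : ℝ)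
    (hr : 0 < r) (hα : 0 < α) (hβ : 0 < β) (hγ : 0 < γ) (hν : 0 < ν) (hμ : 0 < μ)
    (hτ : 0 < τ) (hω : 0 < ω) (hθ : 0 < θ) (hσ : 0 < σ) (hτω : τ < ω)
    (hexp : 0 < γ * (μ * α - β)) (hp : 0 ≤ p) (hq : 0 ≤ q) (hz : |z| ≤ 1) :
    mathieuPQ μ ν τ ω α β r p q z (fun k => Real.Gamma (θ * (k : ℝ) + σ) ^ γ) =
      (1 / betaE τ (ω - τ)) *
        ∫ t in Ioo (0:ℝ) 1, t ^ (τ - 1) * (1 - t) ^ (ω - τ - 1) *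
          Real.exp (-p / t - q / (1 - t)) *
          mathieuC μ ν α β r (z * t) (fun k => Real.Gamma (θ * (k : ℝ) + σ) ^ γ) :=
  statement17_general r α β γ ν μ τ ω θ σ p q z hν hμ hτ hθ hσ hτω hexp hp hq hz
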